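/- The pair (G, X) with G the directed 3-cycle a → b → c → a and X the subdigraph a → b fails the homotopy extension property: there exists a one-step homotopy F : X □ I⁺ → G with F(-,0) the inclusion (namely F(a,1)=F(b,1)=b) that admits no extension F̂ : G □ I⁺ → G with F̂(-,0) = id_G and F̂ restricting to F on X □ I⁺. -/

import Mathlib

/-- A directed graph: a vertex type with a loopless edge relation. -/
structure DGraph where
  V : Type
  E : V → V → Prop
  loopless : ∀ v, ¬ E v v

/-- A digraph map: each edge is collapsed or preserved. -/
structure DMap (G H : DGraph) where
  toFun : G.V → H.V
  map_edge : ∀ {x y}, G.E x y → toFun x = toFun y ∨ H.E (toFun x) (toFun y)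

def DMap.id (G : DGraph) : DMap G G := ⟨fun x => x, fun e => Or.inr e⟩

def DMap.comp {G H K : DGraph} (g : DMap H K) (f : DMap G H) : DMap G K :=
  ⟨fun x => g.toFun (f.toFun x), fun e => by
    rcases f.map_edge e with h | h
    · exact Or.inl (congrArg g.toFun h)
    · exact g.map_edge h⟩

/-- The `n`-step line digraph with orientations given by `o`:
if `o i` then the edge between `i` and `i+1` goes `i → i+1`, else `i+1 → i`. -/
def lineD (n : ℕ) (o : ℕ → Bool) : DGraph where
  V := Fin (n+1)
  E i j := ((j:ℕ) = (i:ℕ)+1 ∧ o (i:ℕ) = true) ∨ ((i:ℕ) = (j:ℕ)+1 ∧ o (j:ℕ) = false)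
  loopless := by rintro v (⟨h,_⟩|⟨h,_⟩) <;> omega

/-- The box product of digraphs. -/
def boxProd (G H : DGraph) : DGraph where
  V := G.V × H.V
  E p q := (p.1 = q.1 ∧ H.E p.2 q.2) ∨ (G.E p.1 q.1 ∧ p.2 = q.2)
  loopless := by
    rintro ⟨a,b⟩ (⟨_,h⟩|⟨h,_⟩)
    · exact H.loopless _ h
    · exact G.loopless _ h

/-- Homotopy of digraph maps via a line-digraph parametrized family. -/
def Homotopic {G H : DGraph} (f g : DMap G H) : Prop :=
  ∃ (n : ℕ) (o : ℕ → Bool) (F : DMap (boxProd G (lineD n o)) H),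
    (∀ x, F.toFun (x, (0 : Fin (n+1))) = f.toFun x) ∧
    (∀ x, F.toFun (x, Fin.last n) = g.toFun x)

def DMap.const (G H : DGraph) (c : H.V) : DMap G H := ⟨fun _ => c, fun _ => Or.inl rfl⟩

/-- A digraph is contractible if its identity is homotopic to a constant map. -/
def Contractible (G : DGraph) : Prop :=
  ∃ c : G.V, Homotopic (DMap.id G) (DMap.const G G c)

/-- Homotopy equivalence of digraphs. -/
def HomotopyEquivalence {G H : DGraph} (u : DMap G H) (v : DMap H G) : Prop :=
  Homotopic (v.comp u) (DMap.id G) ∧ Homotopic (u.comp v) (DMap.id H)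

/-- The directed 3-cycle `a → b → c → a` (with `a = 0`, `b = 1`, `c = 2`). -/
def C3 : DGraph where
  V := Fin 3
  E i j := j = i + 1
  loopless := by decide

/-- The subdigraph `a → b`. -/
def X2 : DGraph where
  V := Fin 2
  E i j := i = 0 ∧ j = 1
  loopless := by decide

/-- The inclusion `X ↪ G`. -/
def inclX2C3 : DMap X2 C3 :=
  ⟨fun i => ⟨i.val, by omega⟩, by rintro x y ⟨rfl, rfl⟩; exact Or.inr (show (⟨1,by omega⟩ : Fin 3) = ⟨0,by omega⟩ + 1 by decide)⟩

/-- The line digraph `I⁺ = 0 → 1`. -/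
def Iplus : DGraph := lineD 1 (fun _ => true)

/-- The pair `(G, X)`, with `G` the directed 3-cycle and `X` the edge
`a → b`, fails the homotopy extension property: the one-step homotopy `F` on `X` starting
at the inclusion with `F(a,1) = F(b,1) = b` admits no extension `F̂ : G □ I⁺ → G` with
`F̂(-,0) = id` restricting to `F`. -/
theorem homotopy_extension_property_fails :
    ∃ F : DMap (boxProd X2 Iplus) C3,
      (∀ x : X2.V, F.toFun (x, (0 : Fin 2)) = inclX2C3.toFun x) ∧
      (∀ x : X2.V, F.toFun (x, (1 : Fin 2)) = (1 : Fin 3)) ∧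
      ¬ ∃ Fh : DMap (boxProd C3 Iplus) C3,
          (∀ v : C3.V, Fh.toFun (v, (0 : Fin 2)) = v) ∧
          (∀ (x : X2.V) (i : Iplus.V), Fh.toFun (inclX2C3.toFun x, i) = F.toFun (x, i)) := by
  -- the homotopy F, defined over `Fin 2 × Fin 2`
  have key : ∀ x y : Fin 2 × Fin 2,
      ((x.1 = y.1 ∧ (((y.2 : ℕ) = (x.2 : ℕ) + 1 ∧ (true : Bool) = true) ∨
          ((x.2 : ℕ) = (y.2 : ℕ) + 1 ∧ (true : Bool) = false))) ∨
        ((x.1 = 0 ∧ y.1 = 1) ∧ x.2 = y.2)) →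
      ((if x.2 = 0 then (⟨x.1.val, by omega⟩ : Fin 3) else 1) =
          (if y.2 = 0 then (⟨y.1.val, by omega⟩ : Fin 3) else 1) ∨
        (if y.2 = 0 then (⟨y.1.val, by omega⟩ : Fin 3) else 1) =
          (if x.2 = 0 then (⟨x.1.val, by omega⟩ : Fin 3) else 1) + 1) := by decide
  refine ⟨⟨fun p : Fin 2 × Fin 2 => if p.2 = 0 then (⟨p.1.val, by omega⟩ : Fin 3) else (1 : Fin 3),
      fun {x y} h => key x y h⟩, ?_, ?_, ?_⟩
  · intro x
    show (if (0 : Fin 2) = 0 then (⟨x.val, by exact x.isLt.trans (by norm_num)⟩ : Fin 3) else 1) = ⟨x.val, by exact x.isLt.trans (by norm_num)⟩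
    simp
  · intro x
    show (if (1 : Fin 2) = 0 then (⟨x.val, by exact x.isLt.trans (by norm_num)⟩ : Fin 3) else (1 : Fin 3)) = (1 : Fin 3)
    simp
  · rintro ⟨Fh, h0, hr⟩
    have hc0 : Fh.toFun ((2 : Fin 3), (0 : Fin 2)) = (2 : Fin 3) := h0 (2 : Fin 3)
    have ha1 : Fh.toFun ((0 : Fin 3), (1 : Fin 2)) = (1 : Fin 3) := by
      have h := hr (0 : Fin 2) ((1 : Fin 2) : Iplus.V)
      exact (by simpa using h : Fh.toFun (inclX2C3.toFun (0 : Fin 2), ((1 : Fin 2) : Iplus.V)) = (1 : Fin 3))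
    have hb1 : Fh.toFun ((1 : Fin 3), (1 : Fin 2)) = (1 : Fin 3) := by
      have h := hr (1 : Fin 2) ((1 : Fin 2) : Iplus.V)
      exact (by simpa using h : Fh.toFun (inclX2C3.toFun (1 : Fin 2), ((1 : Fin 2) : Iplus.V)) = (1 : Fin 3))
    have e1 : (boxProd C3 Iplus).E ((2 : Fin 3), (0 : Fin 2)) ((2 : Fin 3), (1 : Fin 2)) :=
      Or.inl ⟨rfl, Or.inl ⟨rfl, rfl⟩⟩
    have e2 : (boxProd C3 Iplus).E ((1 : Fin 3), (1 : Fin 2)) ((2 : Fin 3), (1 : Fin 2)) :=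
      Or.inr ⟨rfl, rfl⟩
    have e3 : (boxProd C3 Iplus).E ((2 : Fin 3), (1 : Fin 2)) ((0 : Fin 3), (1 : Fin 2)) :=
      Or.inr ⟨rfl, rfl⟩
    have m1 := Fh.map_edge e1
    have m2 := Fh.map_edge e2
    have m3 := Fh.map_edge e3
    rw [hc0] at m1; rw [hb1] at m2; rw [ha1] at m3
    set z : Fin 3 := Fh.toFun ((2 : Fin 3), (1 : Fin 2)) with hz
    clear_value z; clear hz
    revert m1 m2 m3
    show ((2 : Fin 3) = z ∨ z = 2 + 1) → ((1 : Fin 3) = z ∨ z = 1 + 1) →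
        (z = (1 : Fin 3) ∨ (1 : Fin 3) = z + 1) → False
    revert z; decide
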